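/- arXiv:1107.2372 — 2 statements merged into one kernel-verified Lean document; each statement's English description precedes it below -/
import Mathlib

section
/- Let E be a Hilbert C*-module over a C*-algebra A, let L ⊆ E be a convex set and let x₀ ∈ E. Then for any y₁,…,yₙ ∈ L and convex coefficients λ₁,…,λₙ ≥ 0 with ∑ λ_j = 1, one has ∑_{j=1}^n λ_j ⟨y_j − x₀, y_j − x₀⟩ ≥ ⟨x₀ − ∑_j λ_j y_j, x₀ − ∑_j λ_j y_j⟩ in the positive cone of A. Consequently, if δ := inf{‖y − x₀‖² : y ∈ L} > 0, then every element b of the closed convex hull of {⟨y−x₀, y−x₀⟩ : y ∈ L} satisfies ‖b‖ ≥ δ. -/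
open scoped ComplexOrder RightActions InnerProductSpace
open CStarModule

noncomputable section

/-! The weighted variance identity `∑ wᵢ ⟪zᵢ - m, zᵢ - m⟫ = ∑ wᵢ ⟪zᵢ, zᵢ⟫ - ⟪m, m⟫`, with
`m = ∑ wᵢ zᵢ`, makes `z ↦ ⟪z, z⟫` convex for the order of `A`. Applied to `zᵢ = yᵢ - x₀`, it
shows that each point of the convex hull of `{⟪y - x₀, y - x₀⟫ : y ∈ L}` dominates
`⟪y - x₀, y - x₀⟫` for some `y ∈ L` (the matching convex combination), hence has norm at least
`‖y - x₀‖² ≥ δ`, since the norm is monotone on the positive cone; the bound passes to the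
closure. -/

namespace CStarModule

section Variance

variable {A E : Type*} [CStarAlgebra A] [PartialOrder A]
  [NormedAddCommGroup E] [NormedSpace ℂ E] [SMul A E] [CStarModule A E]
  {ι : Type*} [Fintype ι]

theorem sum_smul_inner_sub_centroid (z : ι → E) {w : ι → ℝ} (hw : ∑ i, w i = 1) :
    ∑ i, w i • ⟪z i - ∑ j, w j • z j, z i - ∑ j, w j • z j⟫_A
      = ∑ i, w i • ⟪z i, z i⟫_A - ⟪∑ j, w j • z j, ∑ j, w j • z j⟫_A := by
  set m := ∑ j, w j • z j
  have hleft : ∑ i, w i • ⟪z i, m⟫_A = ⟪m, m⟫_A := by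
    simp only [m, inner_sum_left, inner_smul_left_real]
  have hright : ∑ i, w i • ⟪m, z i⟫_A = ⟪m, m⟫_A := by
    simp only [m, inner_sum_right, inner_smul_right_real]
  simp only [inner_sub_left, inner_sub_right, smul_sub, Finset.sum_sub_distrib, hleft, hright,
    ← Finset.sum_smul, hw, one_smul]
  abel

end Variance

section Order

variable {A E : Type*} [CStarAlgebra A] [PartialOrder A] [StarOrderedRing A]
  [NormedAddCommGroup E] [NormedSpace ℂ E] [SMul A E] [CStarModule A E]
  {ι : Type*} [Fintype ι]

theorem inner_self_sum_smul_le {w : ι → ℝ} (hw₀ : ∀ i, 0 ≤ w i) (hw₁ : ∑ i, w i = 1)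
    (z : ι → E) :
    ⟪∑ i, w i • z i, ∑ i, w i • z i⟫_A ≤ ∑ i, w i • ⟪z i, z i⟫_A := by
  have hvar : 0 ≤ ∑ i, w i • ⟪z i - ∑ j, w j • z j, z i - ∑ j, w j • z j⟫_A :=
    Finset.sum_nonneg fun i _ => smul_nonneg (hw₀ i) inner_self_nonneg
  rwa [sum_smul_inner_sub_centroid z hw₁, sub_nonneg] at hvar

theorem inner_self_sub_sum_smul_le {w : ι → ℝ} (hw₀ : ∀ i, 0 ≤ w i) (hw₁ : ∑ i, w i = 1)
    (x₀ : E) (y : ι → E) :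
    ⟪x₀ - ∑ i, w i • y i, x₀ - ∑ i, w i • y i⟫_A ≤ ∑ i, w i • ⟪y i - x₀, y i - x₀⟫_A := by
  have hcentroid : ∑ i, w i • (y i - x₀) = -(x₀ - ∑ i, w i • y i) := by
    simp only [smul_sub, Finset.sum_sub_distrib, ← Finset.sum_smul, hw₁, one_smul, neg_sub]
  simpa only [hcentroid, inner_neg_left, inner_neg_right, neg_neg] using
    inner_self_sum_smul_le (A := A) hw₀ hw₁ (fun i => y i - x₀)

theorem exists_inner_self_sub_le_of_mem_convexHull {L : Set E} (hL : Convex ℝ L) (x₀ : E)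
    {a : A} (ha : a ∈ convexHull ℝ {a : A | ∃ y ∈ L, a = ⟪y - x₀, y - x₀⟫_A}) :
    ∃ y ∈ L, ⟪y - x₀, y - x₀⟫_A ≤ a := by
  obtain ⟨ι, _, w, b, hw₀, hw₁, hb, rfl⟩ := mem_convexHull_iff_exists_fintype.mp ha
  choose y hyL hb using hb
  obtain rfl : b = fun i => ⟪y i - x₀, y i - x₀⟫_A := funext hb
  refine ⟨∑ i, w i • y i, hL.sum_mem (fun i _ => hw₀ i) hw₁ (fun i _ => hyL i), ?_⟩
  rw [← neg_sub x₀, inner_neg_left, inner_neg_right, neg_neg]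
  exact inner_self_sub_sum_smul_le hw₀ hw₁ x₀ y

end Order

end CStarModule

/-- Let `L` be a convex subset of a Hilbert C⋆-module `E` over `A` and `x₀ ∈ E`. Then for any
`y₁, …, yₙ ∈ L` and convex coefficients `λⱼ`, one has
`∑ λⱼ ⟪yⱼ − x₀, yⱼ − x₀⟫ ≥ ⟪x₀ − ∑ λⱼ yⱼ, x₀ − ∑ λⱼ yⱼ⟫` in the positive cone of `A`.
Consequently, if `δ := inf {‖y − x₀‖² : y ∈ L} > 0`, then every element `b` of the closed
convex hull of `{⟪y − x₀, y − x₀⟫ : y ∈ L}` satisfies `‖b‖ ≥ δ`. -/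
theorem convex_set_inner_estimates
    {A E : Type*} [CStarAlgebra A] [PartialOrder A] [StarOrderedRing A]
    [NormedAddCommGroup E] [NormedSpace ℂ E] [SMul A E] [CStarModule A E]
    (L : Set E) (hL : Convex ℝ L) (x₀ : E) :
    (∀ (n : ℕ) (y : Fin n → E), (∀ i, y i ∈ L) → ∀ lam : Fin n → ℝ,
      (∀ i, 0 ≤ lam i) → ∑ i, lam i = 1 →
      ⟪x₀ - ∑ j, ((lam j : ℝ) : ℂ) • y j, x₀ - ∑ j, ((lam j : ℝ) : ℂ) • y j⟫_A
        ≤ ∑ j, ((lam j : ℝ) : ℂ) • ⟪y j - x₀, y j - x₀⟫_A)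
    ∧ (0 < sInf {r : ℝ | ∃ y ∈ L, r = ‖y - x₀‖ ^ 2} →
        ∀ b ∈ closure (convexHull ℝ {a : A | ∃ y ∈ L, a = ⟪y - x₀, y - x₀⟫_A}),
          sInf {r : ℝ | ∃ y ∈ L, r = ‖y - x₀‖ ^ 2} ≤ ‖b‖) := by
  refine ⟨fun n y _ lam h₀ h₁ => by
    simpa only [Complex.coe_smul] using inner_self_sub_sum_smul_le h₀ h₁ x₀ y, fun _ => ?_⟩
  set δ := sInf {r : ℝ | ∃ y ∈ L, r = ‖y - x₀‖ ^ 2}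
  have hδ : ∀ y ∈ L, δ ≤ ‖y - x₀‖ ^ 2 := fun y hy =>
    csInf_le ⟨0, by rintro _ ⟨_, _, rfl⟩; positivity⟩ ⟨y, hy, rfl⟩
  have hhull : convexHull ℝ {a : A | ∃ y ∈ L, a = ⟪y - x₀, y - x₀⟫_A} ⊆ {b | δ ≤ ‖b‖} := by
    intro a ha
    obtain ⟨y, hyL, hle⟩ := exists_inner_self_sub_le_of_mem_convexHull hL x₀ ha
    calc δ ≤ ‖y - x₀‖ ^ 2 := hδ y hyL
      _ = ‖⟪y - x₀, y - x₀⟫_A‖ := norm_sq_eq A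
      _ ≤ ‖a‖ := CStarAlgebra.norm_le_norm_of_nonneg_of_le inner_self_nonneg hle
  exact closure_minimal hhull (isClosed_le continuous_const continuous_norm)

end
end

section
/- Let E be a Hilbert C*-module over a C*-algebra A and let L ⊆ E be a closed convex subset. For every x₀ ∈ E \ L there exists a state ω on A such that in the localization Hilbert space E^ω (the completion of E with respect to the semi-inner product (x,y) ↦ ω(⟨x,y⟩)) the image ι_ω(x₀) is not in the closure of ι_ω(L). In particular, if L is a closed proper A-submodule of E, there exists a state ω such that the closure of ι_ω(L) in E^ω has nonzero orthogonal complement. -/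
open scoped ComplexOrder RightActions InnerProductSpace
open CStarModule

noncomputable section

/-- The December 2024 Mathlib `CStarModule` (right `A`-action through `Aᵐᵒᵖ`), restated here
because Mathlib's `CStarModule` now uses a left action `SMul A E`. -/
class CStarModuleRight (A : outParam <| Type*) (E : Type*) [NonUnitalSemiring A] [StarRing A]
    [Module ℂ A] [AddCommGroup E] [Module ℂ E] [PartialOrder A] [SMul Aᵐᵒᵖ E] [Norm A] [Norm E]
    extends Inner A E where
  inner_add_right {x} {y} {z} : inner x (y + z) = inner x y + inner x z
  inner_self_nonneg {x} : 0 ≤ inner x x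
  inner_self {x} : inner x x = 0 ↔ x = 0
  inner_op_smul_right {a : A} {x y : E} : inner x (y <• a) = inner x y * a
  inner_smul_right_complex {z : ℂ} {x} {y} : inner x (z • y) = z • inner x y
  star_inner x y : star (inner x y) = inner y x
  norm_eq_sqrt_norm_inner_self x : ‖x‖ = √‖inner x x‖

/-- An unbounded operator in a Hilbert C⋆-module `E`: a `ℂ`-linear map defined on a
`ℂ`-submodule of `E`. -/
structure UnboundedOperator (E : Type*) [NormedAddCommGroup E] [Module ℂ E] where
  dom : Submodule ℂ E
  toFun : dom →ₗ[ℂ] E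

namespace UnboundedOperator

variable {A E : Type*} [CStarAlgebra A] [PartialOrder A] [StarOrderedRing A]
  [NormedAddCommGroup E] [Module ℂ E] [SMul Aᵐᵒᵖ E] [CStarModuleRight A E]

/-- `y` and `z` satisfy the adjoint relation for `T`: `⟪Tx, y⟫ = ⟪x, z⟫` for all `x ∈ dom T`. -/
def AdjRel (T : UnboundedOperator E) (y z : E) : Prop :=
  ∀ x : T.dom, ⟪T.toFun x, y⟫_A = ⟪(x : E), z⟫_A

/-- The domain of the adjoint of `T`. -/
def adjDom (T : UnboundedOperator E) : Set E := {y | ∃ z, T.AdjRel (A := A) y z}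

/-- `T` is semiregular: both `T` and its adjoint are densely defined. -/
def Semiregular (T : UnboundedOperator E) : Prop :=
  Dense (T.dom : Set E) ∧ Dense (T.adjDom (A := A))

/-- The graph of `T` as a subset of `E × E`. -/
def graph (T : UnboundedOperator E) : Set (E × E) :=
  {p | ∃ x : T.dom, p = ((x : E), T.toFun x)}

/-- `T` is a closed operator. -/
def IsClosedOp (T : UnboundedOperator E) : Prop := IsClosed T.graph

/-- `S` is the adjoint of `T`. -/
def IsAdjointOf (S T : UnboundedOperator E) : Prop :=
  (S.dom : Set E) = T.adjDom (A := A) ∧ ∀ y : S.dom, T.AdjRel (A := A) (y : E) (S.toFun y)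

/-- `T` is symmetric. -/
def Symmetric (T : UnboundedOperator E) : Prop :=
  ∀ x y : T.dom, ⟪T.toFun x, (y : E)⟫_A = ⟪(x : E), T.toFun y⟫_A

/-- `T` is selfadjoint: it is its own adjoint. -/
def SelfAdjointOp (T : UnboundedOperator E) : Prop := IsAdjointOf (A := A) T T

/-- The range of `I + S ∘ T` (for `S` the adjoint of `T` this is the range of `I + T⋆T`). -/
def ranIdAddMul (S T : UnboundedOperator E) : Set E :=
  {y | ∃ (x : T.dom) (hx : T.toFun x ∈ S.dom), y = (x : E) + S.toFun ⟨T.toFun x, hx⟩}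

/-- `T` is regular: it is closed, semiregular, and `I + T⋆T` has dense range. -/
def Regular (T : UnboundedOperator E) : Prop :=
  T.IsClosedOp ∧ T.Semiregular (A := A) ∧
    ∀ S : UnboundedOperator E, IsAdjointOf (A := A) S T → Dense (ranIdAddMul S T)

/-- `Tc` is the closure of `T`: its graph is the closure of the graph of `T`. -/
def IsClosureOf (Tc T : UnboundedOperator E) : Prop :=
  Tc.graph = closure T.graph

end UnboundedOperator

/-- A state on a C⋆-algebra: a positive continuous linear functional of norm one. -/
structure CStarState (A : Type*) [CStarAlgebra A] [PartialOrder A] where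
  toFun : A →L[ℂ] ℂ
  pos : ∀ a : A, 0 ≤ a → 0 ≤ toFun a
  norm_one : ‖toFun‖ = 1

namespace CStarState

variable {A E : Type*} [CStarAlgebra A] [PartialOrder A] [StarOrderedRing A]
  [NormedAddCommGroup E] [Module ℂ E] [SMul Aᵐᵒᵖ E] [CStarModuleRight A E]

/-- A pure state: an extreme point of the state space. -/
def IsPure (ω : CStarState A) : Prop :=
  ∀ (φ ψ : CStarState A) (t : ℝ), 0 < t → t < 1 →
    (∀ a : A, ω.toFun a = (t : ℂ) * φ.toFun a + ((1 - t : ℝ) : ℂ) * ψ.toFun a) →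
    φ.toFun = ω.toFun ∧ ψ.toFun = ω.toFun

/-- The squared seminorm on `E` induced by the state `ω`: the squared norm of the image
of `x` in the localization Hilbert space `E^ω`. -/
def locSq (ω : CStarState A) (x : E) : ℝ := (ω.toFun (⟪x, x⟫_A : A)).re

end CStarState

/-!
The map `y ↦ ⟪y - x₀, y - x₀⟫` is convex for the order of `A`, so the elements of `A` dominating
one of its values on `L` form a convex set `K` of positive elements of norm at least `d²`, where
`d = dist(x₀, L) > 0`. For `a ≥ 0` and `c ≤ 0` we have `‖a‖ ≤ ‖a - c‖`, so `K` stays at distance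
`d²` from the cone of nonpositive elements, and Hahn–Banach separates the two by a real functional.
It is nonnegative on `A₊` and bounded below on `K` by some `u > 0`; its complex extension,
normalized, is the required state.
-/

open Metric Set

section ConeSeparation

variable {V : Type*} [NormedAddCommGroup V] [NormedSpace ℝ V]

theorem PointedCone.exists_dual_nonpos_and_le_of_disjoint_thickening (C : PointedCone ℝ V)
    {K : Set V} (hK : Convex ℝ K) {δ : ℝ} (hδ : 0 < δ)
    (hCK : Disjoint (thickening δ (C : Set V)) K) :
    ∃ (f : StrongDual ℝ V) (u : ℝ), 0 < u ∧ (∀ c ∈ C, f c ≤ 0) ∧ ∀ a ∈ K, u ≤ f a := by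
  obtain ⟨f, u, hfC, hfK⟩ :=
    geometric_hahn_banach_open (C.convex.thickening δ) isOpen_thickening hK hCK
  have hlt : ∀ c ∈ C, f c < u := fun c hc => hfC c (self_subset_thickening hδ _ hc)
  have hu : 0 < u := by simpa using hlt 0 C.zero_mem
  refine ⟨f, u, hu, fun c hc => ?_, hfK⟩
  by_contra! hpos
  -- `f < u` on the whole ray `ℝ≥0 • c ⊆ C`, which is impossible if `f c > 0`
  have := hlt _ (C.smul_mem (div_pos hu hpos).le hc)
  rw [map_smul, smul_eq_mul, div_mul_cancel₀ _ hpos.ne'] at this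
  exact this.false

end ConeSeparation

section StateConstruction

variable {A : Type*} [CStarAlgebra A]

theorem StrongDual.exists_complex_eq_on_isSelfAdjoint (f : StrongDual ℝ A) :
    ∃ φ : StrongDual ℂ A, ∀ a, IsSelfAdjoint a → φ a = f a := by
  set g : StrongDual ℝ A :=
    (2 : ℝ)⁻¹ • (f + f.comp (starL' ℝ : A ≃L[ℝ] A).toContinuousLinearMap)
  have hg : ∀ a, g a = 2⁻¹ * (f a + f (star a)) := by
    intro a
    simp [g, mul_add]
  refine ⟨StrongDual.extendRCLike g, fun a ha => ?_⟩
  -- `g` is `star`-invariant, so it vanishes on the skew-adjoint element `I • a`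
  have hIa : g (Complex.I • a) = 0 := by
    have hstar : star (Complex.I • a) = -(Complex.I • a) := by
      rw [star_smul, ha.star_eq, RCLike.star_def, Complex.conj_I, neg_smul]
    rw [hg, hstar, map_neg]
    ring
  have hga : g a = f a := by rw [hg, ha.star_eq]; ring
  simp [StrongDual.extendRCLike_apply, hIa, hga]

theorem CStarAlgebra.disjoint_thickening_nonpos [PartialOrder A] [StarOrderedRing A]
    {K : Set A} {δ : ℝ} (hpos : ∀ a ∈ K, 0 ≤ a) (hnorm : ∀ a ∈ K, δ ≤ ‖a‖) :
    Disjoint (thickening δ ((PointedCone.positive ℝ A).comap (-LinearMap.id) : Set A)) K := by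
  refine Set.disjoint_left.mpr fun a ha haK => ?_
  obtain ⟨c, hc, hdist⟩ := mem_thickening_iff.mp ha
  have hc : c ≤ 0 := by simpa using hc
  have : ‖a‖ ≤ ‖a - c‖ := CStarAlgebra.norm_le_norm_of_nonneg_of_le (hpos a haK) (by simpa)
  rw [dist_eq_norm] at hdist
  linarith [hnorm a haK]

namespace CStarState

variable [PartialOrder A]

def ofPositive (φ : StrongDual ℂ A) (hφ : ∀ a : A, 0 ≤ a → 0 ≤ φ a) (hφ0 : φ ≠ 0) :
    CStarState A where
  toFun := ((‖φ‖⁻¹ : ℝ) : ℂ) • φ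
  pos a ha := show 0 ≤ ((‖φ‖⁻¹ : ℝ) : ℂ) * φ a from
    mul_nonneg (by exact_mod_cast inv_nonneg.mpr (norm_nonneg φ)) (hφ a ha)
  norm_one := by
    rw [norm_smul, Complex.norm_real, norm_inv, norm_norm,
      inv_mul_cancel₀ (norm_ne_zero_iff.mpr hφ0)]

theorem ofPositive_toFun_re (φ : StrongDual ℂ A) (hφ : ∀ a : A, 0 ≤ a → 0 ≤ φ a)
    (hφ0 : φ ≠ 0) (a : A) : ((ofPositive φ hφ hφ0).toFun a).re = ‖φ‖⁻¹ * (φ a).re := by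
  simp [ofPositive]

variable [StarOrderedRing A]

theorem exists_forall_le_re_of_convex {K : Set A} (hK : Convex ℝ K) (hKne : K.Nonempty)
    {δ : ℝ} (hδ : 0 < δ) (hpos : ∀ a ∈ K, 0 ≤ a) (hnorm : ∀ a ∈ K, δ ≤ ‖a‖) :
    ∃ (ω : CStarState A) (ε : ℝ), 0 < ε ∧ ∀ a ∈ K, ε ≤ (ω.toFun a).re := by
  obtain ⟨f, u, hu, hf_nonpos, hfK⟩ :=
    PointedCone.exists_dual_nonpos_and_le_of_disjoint_thickening _ hK hδ
      (CStarAlgebra.disjoint_thickening_nonpos hpos hnorm)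
  have hf_nonneg : ∀ a : A, 0 ≤ a → 0 ≤ f a := fun a ha => by
    simpa using hf_nonpos (-a) (by simpa using ha)
  obtain ⟨φ, hφf⟩ := f.exists_complex_eq_on_isSelfAdjoint
  have hφ : ∀ a : A, 0 ≤ a → 0 ≤ φ a := fun a ha => by
    rw [hφf a (.of_nonneg ha)]
    exact_mod_cast hf_nonneg a ha
  have hφK : ∀ a ∈ K, u ≤ (φ a).re := fun a ha => by
    simpa [hφf a (.of_nonneg (hpos a ha))] using hfK a ha
  obtain ⟨a₀, ha₀⟩ := hKne
  have hφ0 : φ ≠ 0 := fun h => by simpa [h] using hu.trans_le (hφK a₀ ha₀)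
  have hφnorm : 0 < ‖φ‖⁻¹ := inv_pos.mpr (norm_pos_iff.mpr hφ0)
  refine ⟨ofPositive φ hφ hφ0, ‖φ‖⁻¹ * u, mul_pos hφnorm hu, fun a ha => ?_⟩
  rw [ofPositive_toFun_re]
  exact mul_le_mul_of_nonneg_left (hφK a ha) hφnorm.le

instance [Nontrivial A] : Nonempty (CStarState A) :=
  let ⟨ω, _⟩ := exists_forall_le_re_of_convex (convex_singleton (1 : A))
    (singleton_nonempty 1) one_pos (by simp) (by simp)
  ⟨ω⟩

end CStarState

end StateConstruction

theorem ConvexOn.convex_setOf_exists_le {𝕜 E β : Type*} [Semiring 𝕜] [PartialOrder 𝕜]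
    [AddCommMonoid E] [AddCommMonoid β] [PartialOrder β] [IsOrderedAddMonoid β] [SMul 𝕜 E]
    [Module 𝕜 β] [PosSMulMono 𝕜 β] {s : Set E} {f : E → β} (hf : ConvexOn 𝕜 s f) :
    Convex 𝕜 {b | ∃ x ∈ s, f x ≤ b} := by
  rintro b₁ ⟨x₁, hx₁, h₁⟩ b₂ ⟨x₂, hx₂, h₂⟩ s₁ s₂ hs₁ hs₂ hs
  exact ⟨_, hf.1 hx₁ hx₂ hs₁ hs₂ hs, (hf.2 hx₁ hx₂ hs₁ hs₂ hs).trans (by gcongr)⟩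

namespace CStarModuleRight

variable {A E : Type*} [CStarAlgebra A] [PartialOrder A]
  [NormedAddCommGroup E] [NormedSpace ℂ E] [SMul Aᵐᵒᵖ E] [CStarModuleRight A E]

theorem inner_add_left (x y z : E) : ⟪x + y, z⟫_A = ⟪x, z⟫_A + ⟪y, z⟫_A := by
  rw [← star_inner z, inner_add_right, star_add, star_inner, star_inner]

theorem inner_sub_right (x y z : E) : ⟪x, y - z⟫_A = ⟪x, y⟫_A - ⟪x, z⟫_A := by
  rw [eq_sub_iff_add_eq, ← inner_add_right, sub_add_cancel]

theorem inner_sub_left (x y z : E) : ⟪x - y, z⟫_A = ⟪x, z⟫_A - ⟪y, z⟫_A := by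
  rw [eq_sub_iff_add_eq, ← inner_add_left, sub_add_cancel]

theorem inner_real_smul_right (x y : E) (r : ℝ) : ⟪x, r • y⟫_A = r • ⟪x, y⟫_A := by
  rw [RCLike.real_smul_eq_coe_smul (K := ℂ) r y, inner_smul_right_complex,
    ← RCLike.real_smul_eq_coe_smul (K := ℂ)]

theorem inner_real_smul_left (x y : E) (r : ℝ) : ⟪r • x, y⟫_A = r • ⟪x, y⟫_A := by
  rw [← star_inner y, inner_real_smul_right, star_smul, star_trivial, star_inner]

theorem convexOn_inner_self [StarOrderedRing A] : ConvexOn ℝ univ (fun x : E => ⟪x, x⟫_A) := by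
  refine ⟨convex_univ, fun x _ y _ s t hs ht hst => ?_⟩
  obtain rfl : t = 1 - s := by linarith
  rw [← sub_nonneg]
  have key : s • ⟪x, x⟫_A + (1 - s) • ⟪y, y⟫_A - ⟪s • x + (1 - s) • y, s • x + (1 - s) • y⟫_A
      = (s * (1 - s)) • ⟪x - y, x - y⟫_A := by
    simp only [inner_add_left, inner_add_right, inner_sub_left, inner_sub_right,
      inner_real_smul_left, inner_real_smul_right, smul_sub, smul_add, smul_smul]
    module
  rw [key]
  exact smul_nonneg (mul_nonneg hs ht) inner_self_nonneg

theorem norm_sq_eq_norm_inner_self (x : E) : ‖x‖ ^ 2 = ‖⟪x, x⟫_A‖ := by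
  rw [norm_eq_sqrt_norm_inner_self x, Real.sq_sqrt (norm_nonneg _)]

end CStarModuleRight

/-- **Separation theorem for Hilbert C⋆-modules.** Let `L ⊆ E` be a closed convex subset of the
Hilbert C⋆-module `E` over `A`. For each vector `x₀ ∈ E \ L` there exists a state `ω` on `A`
such that the image `ι_ω(x₀)` of `x₀` in the localization Hilbert space `E^ω` is not in the
closure of `ι_ω(L)`; i.e. the `ω`-distance from `x₀` to `L` is bounded below by some `ε > 0`.
(In particular `ι_ω(L)` is not dense in `E^ω` and, when `L` is a submodule, its closure has
nonzero orthogonal complement.) -/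
theorem separation_theorem
    {A E : Type*} [CStarAlgebra A] [PartialOrder A] [StarOrderedRing A] [Nontrivial A]
    [NormedAddCommGroup E] [NormedSpace ℂ E] [SMul Aᵐᵒᵖ E] [CStarModuleRight A E]
    (L : Set E) (hLconv : Convex ℝ L) (hLclosed : IsClosed L)
    (x₀ : E) (hx₀ : x₀ ∉ L) :
    ∃ (ω : CStarState A) (ε : ℝ), 0 < ε ∧ ∀ y ∈ L, ε ≤ ω.locSq (y - x₀) := by
  rcases L.eq_empty_or_nonempty with rfl | ⟨y₀, hy₀⟩
  · exact ⟨Classical.arbitrary _, 1, one_pos, by simp⟩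
  have hd : 0 < infDist x₀ L := (hLclosed.notMem_iff_infDist_pos ⟨y₀, hy₀⟩).mp hx₀
  have hdist : ∀ y ∈ L, infDist x₀ L ^ 2 ≤ ‖⟪y - x₀, y - x₀⟫_A‖ := fun y hy => by
    rw [← CStarModuleRight.norm_sq_eq_norm_inner_self, ← dist_eq_norm, dist_comm]
    gcongr
    exact infDist_le_dist_of_mem hy
  have hq : ConvexOn ℝ L (fun y => ⟪y - x₀, y - x₀⟫_A) := by
    simpa only [Function.comp_def, ← sub_eq_add_neg, preimage_univ] using
      (CStarModuleRight.convexOn_inner_self.translate_left (-x₀)).subset (subset_univ L) hLconv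
  obtain ⟨ω, ε, hε, hωK⟩ := CStarState.exists_forall_le_re_of_convex hq.convex_setOf_exists_le
    ⟨_, y₀, hy₀, le_rfl⟩ (pow_pos hd 2)
    (fun a ⟨_, _, hya⟩ => CStarModuleRight.inner_self_nonneg.trans hya)
    (fun a ⟨y, hy, hya⟩ =>
      (hdist y hy).trans (CStarAlgebra.norm_le_norm_of_nonneg_of_le
        CStarModuleRight.inner_self_nonneg hya))
  exact ⟨ω, ε, hε, fun y hy => hωK _ ⟨y, hy, le_rfl⟩⟩

end
end
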